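/- Let A be a finite alphabet, c a letter not in A, B = A ∪ {c}, and let f : A* → B* be defined by f(w) = w for w ≠ 1 and f(1) = c. Extend f componentwise to pairs. If T ⊆ A* × A* is a rational relation, then f(T) = {(f(u), f(v)) | (u,v) ∈ T} is a rational subset of B* × B*. -/

import Mathlib

open scoped Pointwise
open Classical

/-- Rational subsets of a monoid. -/
inductive IsRational {M : Type} [Monoid M] : Set M → Prop
  | finite (s : Set M) : s.Finite → IsRational s
  | union (s t : Set M) : IsRational s → IsRational t → IsRational (s ∪ t)
  | mul (s t : Set M) : IsRational s → IsRational t → IsRational (s * t)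
  | star (s : Set M) : IsRational s → IsRational (Submonoid.closure s : Set M)

/-- The map `f : A* → B*`, `B = A ∪ {c}`, fixing nonempty words and sending the empty
word to the new letter `c` (modelled as `Sum.inr ()`). -/
noncomputable def padEmpty {A : Type} (w : FreeMonoid A) : FreeMonoid (A ⊕ Unit) :=
  if w = 1 then FreeMonoid.of (Sum.inr ()) else FreeMonoid.map Sum.inl w

/-!
Recording which components of a pair `(u, v)` are nonempty is a morphism `φ` onto the
finite semilattice `Bool × Bool` (with `⊔` as product). On each fibre of `φ` the map `f`
is the letter embedding followed by right multiplication by a constant pair (`c` in the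
empty components), so it suffices that every fibre of a rational relation is rational:
a rational set meets a set recognized by `φ` in a rational set. This is an induction on
the rational expression. In the star case an element of `s*` of value `x ≠ ⊥` is cut
at the first factor where the value of its prefix reaches `x`; the fibre over `x` is thus
built from fibres over `y < x`, one factor from `s`, and the star of the part of `s`
below `x`.
-/

namespace IsRational

variable {M : Type} [Monoid M]

theorem biUnion {ι : Type} {I : Set ι} (hI : I.Finite) {f : ι → Set M}
    (hf : ∀ i ∈ I, IsRational (f i)) : IsRational (⋃ i ∈ I, f i) := by
  induction I, hI using Set.Finite.induction_on with
  | empty => simpa using IsRational.finite (∅ : Set M) Set.finite_empty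
  | @insert a I _ _ ih =>
    rw [Set.biUnion_insert]
    exact .union _ _ (hf a (Set.mem_insert a I))
      (ih fun i hi => hf i (Set.mem_insert_of_mem a hi))

theorem iUnion {ι : Type} [Finite ι] {f : ι → Set M} (hf : ∀ i, IsRational (f i)) :
    IsRational (⋃ i, f i) := by
  simpa using biUnion Set.finite_univ fun i _ => hf i

theorem image {N : Type} [Monoid N] (h : M →* N) {s : Set M} (hs : IsRational s) :
    IsRational (h '' s) := by
  induction hs with
  | finite s hs => exact .finite _ (hs.image h)
  | union s t _ _ ihs iht => rw [Set.image_union]; exact .union _ _ ihs iht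
  | mul s t _ _ ihs iht => rw [Set.image_mul]; exact .mul _ _ ihs iht
  | star s _ ih =>
    rw [← Submonoid.coe_map, MonoidHom.map_mclosure]
    exact .star _ ih

end IsRational

structure IsSupBotHom {M F : Type} [Monoid M] [SemilatticeSup F] [OrderBot F]
    (φ : M → F) : Prop where
  map_one : φ 1 = ⊥
  map_mul : ∀ a b, φ (a * b) = φ a ⊔ φ b

theorem IsSupBotHom.prodMap {M N F G : Type} [Monoid M] [Monoid N] [SemilatticeSup F]
    [OrderBot F] [SemilatticeSup G] [OrderBot G] {φ : M → F} {ψ : N → G}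
    (hφ : IsSupBotHom φ) (hψ : IsSupBotHom ψ) : IsSupBotHom (Prod.map φ ψ) where
  map_one := Prod.ext hφ.map_one hψ.map_one
  map_mul a b := Prod.ext (hφ.map_mul a.1 b.1) (hψ.map_mul a.2 b.2)

theorem isSupBotHom_decide_ne_one {M : Type} [CancelMonoid M] [Subsingleton Mˣ] :
    IsSupBotHom fun a : M => decide (a ≠ 1) where
  map_one := by simp
  map_mul a b := by
    simp only [ne_eq, mul_eq_one', not_and_or]
    simp

namespace IsSupBotHom

variable {M F : Type} [Monoid M] [SemilatticeSup F] [OrderBot F] {φ : M → F}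

theorem mul_inter_preimage (hφ : IsSupBotHom φ) (s t : Set M) (U : Set F) :
    s * t ∩ φ ⁻¹' U = ⋃ y, (s ∩ φ ⁻¹' {y}) * (t ∩ φ ⁻¹' {z | y ⊔ z ∈ U}) := by
  ext w
  simp only [Set.mem_inter_iff, Set.mem_mul, Set.mem_iUnion, Set.mem_preimage,
    Set.mem_singleton_iff, Set.mem_ofPred_eq]
  constructor
  · rintro ⟨⟨a, ha, b, hb, rfl⟩, hw⟩
    exact ⟨φ a, a, ⟨ha, rfl⟩, b, ⟨hb, by rwa [← hφ.map_mul]⟩, rfl⟩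
  · rintro ⟨_, a, ⟨ha, rfl⟩, b, ⟨hb, hab⟩, rfl⟩
    exact ⟨⟨a, ha, b, hb, rfl⟩, by rwa [hφ.map_mul]⟩

theorem closure_inter_preimage_Iic (hφ : IsSupBotHom φ) (s : Set M) (x : F) :
    (Submonoid.closure s : Set M) ∩ φ ⁻¹' Set.Iic x =
      Submonoid.closure (s ∩ φ ⁻¹' Set.Iic x) := by
  ext w
  constructor
  · rintro ⟨hw, hwx⟩
    induction hw using Submonoid.closure_induction_right with
    | one => exact one_mem _
    | mul_right w _ m hm ih =>
      rw [Set.mem_preimage, hφ.map_mul, Set.mem_Iic, sup_le_iff] at hwx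
      exact mul_mem (ih hwx.1) (Submonoid.subset_closure ⟨hm, hwx.2⟩)
  · intro hw
    refine ⟨Submonoid.closure_mono Set.inter_subset_left hw, ?_⟩
    induction hw using Submonoid.closure_induction with
    | mem m hm => exact hm.2
    | one => simp [hφ.map_one]
    | mul a b _ _ ha hb =>
      rw [Set.mem_preimage, hφ.map_mul]
      exact sup_le ha hb

theorem closure_inter_preimage_singleton (hφ : IsSupBotHom φ) (s : Set M) {x : F}
    (hx : x ≠ ⊥) :
    (Submonoid.closure s : Set M) ∩ φ ⁻¹' {x} =
      ⋃ y ∈ Set.Iio x, ((Submonoid.closure s : Set M) ∩ φ ⁻¹' {y}) *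
        (s ∩ φ ⁻¹' {z | y ⊔ z = x}) * (Submonoid.closure (s ∩ φ ⁻¹' Set.Iic x) : Set M) := by
  apply subset_antisymm
  · rintro w ⟨hw, hwx⟩
    induction hw using Submonoid.closure_induction_right with
    | one => exact absurd (hφ.map_one ▸ hwx : ⊥ = x).symm hx
    | mul_right w hw m hm ih =>
      have hwm : φ w ⊔ φ m = x := (hφ.map_mul w m).symm.trans hwx
      by_cases hwx' : φ w = x
      · obtain ⟨y, hy, hw'⟩ := Set.mem_iUnion₂.1 (ih hwx')
        obtain ⟨u, hu, d, hd, rfl⟩ := hw'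
        rw [mul_assoc]
        exact Set.mem_iUnion₂.2 ⟨y, hy, Set.mul_mem_mul hu
          (mul_mem hd (Submonoid.subset_closure ⟨hm, le_sup_right.trans_eq hwm⟩))⟩
      · rw [← mul_one (w * m)]
        exact Set.mem_iUnion₂.2 ⟨φ w, lt_of_le_of_ne (hwm ▸ le_sup_left) hwx',
          Set.mul_mem_mul (Set.mul_mem_mul ⟨hw, rfl⟩ ⟨hm, hwm⟩) (one_mem _)⟩
  · simp only [Set.iUnion_subset_iff]
    rintro y - _ ⟨_, ⟨a, ⟨ha, hay⟩, b, ⟨hb, hyb⟩, rfl⟩, d, hd, rfl⟩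
    have hdx : φ d ≤ x := ((Set.ext_iff.1 (hφ.closure_inter_preimage_Iic s x) d).2 hd).2
    refine ⟨mul_mem (mul_mem ha (Submonoid.subset_closure hb))
      (Submonoid.closure_mono Set.inter_subset_left hd), ?_⟩
    rw [Set.mem_preimage, Set.mem_singleton_iff] at hay
    show φ (a * b * d) = x
    rw [hφ.map_mul, hφ.map_mul, hay, hyb, sup_eq_left.2 hdx]

end IsSupBotHom

theorem IsRational.inter_preimage {M F : Type} [Monoid M] [SemilatticeSup F] [OrderBot F]
    [Finite F] {φ : M → F} (hφ : IsSupBotHom φ) {T : Set M} (hT : IsRational T) (U : Set F) :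
    IsRational (T ∩ φ ⁻¹' U) := by
  induction hT generalizing U with
  | finite s hs => exact .finite _ (hs.subset Set.inter_subset_left)
  | union s t _ _ ihs iht =>
    rw [Set.union_inter_distrib_right]
    exact .union _ _ (ihs U) (iht U)
  | mul s t _ _ ihs iht =>
    rw [hφ.mul_inter_preimage]
    exact .iUnion fun y => .mul _ _ (ihs {y}) (iht _)
  | star s _ ih =>
    rw [← Set.biUnion_of_singleton U, Set.preimage_iUnion₂, Set.inter_iUnion₂]
    refine .biUnion U.toFinite fun x _ => ?_
    clear! U
    induction x using WellFoundedLT.induction with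
    | _ x ihx =>
      by_cases hx : x = ⊥
      · rw [hx, ← Set.Iic_bot, hφ.closure_inter_preimage_Iic]
        exact .star _ (ih _)
      · rw [hφ.closure_inter_preimage_singleton s hx]
        exact .biUnion (Set.toFinite _) fun y hy =>
          .mul _ _ (.mul _ _ (ihx y hy) (ih _)) (.star _ (ih _))

theorem image_eq_iUnion_mul_singleton {M N F : Type} [Monoid N] {g h : M → N} {k : F → N}
    {φ : M → F} (hg : ∀ m, g m = h m * k (φ m)) (T : Set M) :
    g '' T = ⋃ x, h '' (T ∩ φ ⁻¹' {x}) * {k x} := by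
  ext n
  simp only [Set.mem_image, Set.mem_iUnion, Set.mul_singleton, Set.image_image,
    Set.mem_inter_iff, Set.mem_preimage, Set.mem_singleton_iff, hg]
  constructor
  · rintro ⟨m, hm, rfl⟩
    exact ⟨φ m, m, ⟨hm, rfl⟩, rfl⟩
  · rintro ⟨_, m, ⟨hm, rfl⟩, rfl⟩
    exact ⟨m, hm, rfl⟩

theorem padEmpty_eq_map_mul {A : Type} (w : FreeMonoid A) :
    padEmpty w = FreeMonoid.map Sum.inl w * cond (w ≠ 1) 1 (FreeMonoid.of (Sum.inr ())) := by
  by_cases hw : w = 1 <;> simp [padEmpty, hw]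

theorem isRational_padEmpty_image_general {A : Type}
    (T : Set (FreeMonoid A × FreeMonoid A)) (hT : IsRational T) :
    IsRational ((fun p => (padEmpty p.1, padEmpty p.2)) '' T :
      Set (FreeMonoid (A ⊕ Unit) × FreeMonoid (A ⊕ Unit))) := by
  let c : FreeMonoid (A ⊕ Unit) := .of (Sum.inr ())
  let ι : FreeMonoid A × FreeMonoid A →* FreeMonoid (A ⊕ Unit) × FreeMonoid (A ⊕ Unit) :=
    (FreeMonoid.map Sum.inl).prodMap (FreeMonoid.map Sum.inl)
  let φ : FreeMonoid A × FreeMonoid A → Bool × Bool :=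
    Prod.map (fun w => decide (w ≠ 1)) (fun w => decide (w ≠ 1))
  have hφ : IsSupBotHom φ := isSupBotHom_decide_ne_one.prodMap isSupBotHom_decide_ne_one
  rw [image_eq_iUnion_mul_singleton (h := ι) (φ := φ)
    (k := fun x : Bool × Bool => (cond x.1 1 c, cond x.2 1 c))
    (fun p => Prod.ext (padEmpty_eq_map_mul p.1) (padEmpty_eq_map_mul p.2))]
  exact .iUnion fun x =>
    .mul _ _ (.image ι (hT.inter_preimage hφ {x})) (.finite _ (Set.finite_singleton _))

/-- If `T` is a rational relation on `A*`, then its componentwise image under `padEmpty`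
is a rational subset of `B* × B*`, where `B = A ∪ {c}`. -/
theorem isRational_padEmpty_image {A : Type} [Finite A]
    (T : Set (FreeMonoid A × FreeMonoid A)) (hT : IsRational T) :
    IsRational ((fun p => (padEmpty p.1, padEmpty p.2)) '' T :
      Set (FreeMonoid (A ⊕ Unit) × FreeMonoid (A ⊕ Unit))) :=
  isRational_padEmpty_image_general T hT
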